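/- arXiv:2406.11010 — 5 statements merged into one kernel-verified Lean document; each statement's English description precedes it below -/
import Mathlib

section
/- In the MV single-point game with p ≥ 1 correct players and w ≥ 0 incorrect players, the Shapley value of every correct player equals SV^+_{p,w} = (1/(p+w)) Σ_{i=0}^{p−1} Σ_{j=0}^{w} ψ(i, j) · binom(p−1, i) · binom(w, j) / binom(p+w−1, i+j). -/
open Finset

/-- Shapley value of player `j` in the cooperative game `v` on the finite player set `I`. -/
noncomputable def shapley {α : Type*} [DecidableEq α] (I : Finset α) (v : Finset α → ℝ)
    (j : α) : ℝ :=
  (1 / (I.card : ℝ)) * ∑ S ∈ (I.erase j).powerset,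
    (v (insert j S) - v S) / ((I.card - 1).choose S.card : ℝ)

/-- Marginal utility `ψ(a,b)` of a correct LF joining a coalition with `a` correct and `b`
incorrect LFs, with `C` classes. -/
noncomputable def psi (C a b : ℕ) : ℝ :=
  if a + b = 0 then 1 - 1 / (C : ℝ)
  else ((a : ℝ) + 1) / ((a : ℝ) + (b : ℝ) + 1) - (a : ℝ) / ((a : ℝ) + (b : ℝ))

/-- `SV⁺_{p,w}` (equals `0` when `p = 0` since the outer sum is empty). -/
noncomputable def SVpos (C p w : ℕ) : ℝ :=
  (1 / ((p : ℝ) + (w : ℝ))) * ∑ i ∈ Finset.range p, ∑ j ∈ Finset.range (w + 1),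
    psi C i j * ((p - 1).choose i : ℝ) * (w.choose j : ℝ) / ((p + w - 1).choose (i + j) : ℝ)

/-- `SV⁻_{p,w}`. -/
noncomputable def SVneg (C p w : ℕ) : ℝ :=
  ((p : ℝ) / ((p : ℝ) + (w : ℝ)) - 1 / (C : ℝ) - (p : ℝ) * SVpos C p w) / (w : ℝ)

/-- The MV single-point game: `P` the correct players, `W` the incorrect players,
utility `|S ∩ P|/|S| − 1/C` for nonempty `S`, and `0` on the empty coalition. -/
noncomputable def mvGame {α : Type*} [DecidableEq α] (C : ℕ) (P W : Finset α)
    (S : Finset α) : ℝ :=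
  if S = ∅ then 0 else ((S ∩ P).card : ℝ) / (S.card : ℝ) - 1 / (C : ℝ)

/-! The marginal contribution of a correct player to a coalition depends only on how many
correct and incorrect players the coalition contains, so the Shapley sum over coalitions
collapses to a double sum over these two counts, weighted by the number of coalitions of
each type. -/

section

variable {α : Type*} [DecidableEq α]

theorem union_inter_left_of_disjoint {A B T U : Finset α} (h : Disjoint A B)
    (hT : T ⊆ A) (hU : U ⊆ B) : (T ∪ U) ∩ A = T := by
  rw [union_inter_distrib_right, inter_eq_left.2 hT,
    disjoint_iff_inter_eq_empty.1 (h.symm.mono_left hU), union_empty]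

theorem card_inter_add_card_inter_of_subset_union {A B S : Finset α} (h : Disjoint A B)
    (hS : S ⊆ A ∪ B) : (S ∩ A).card + (S ∩ B).card = S.card := by
  rw [← card_union_of_disjoint (h.mono inter_subset_right inter_subset_right),
    ← inter_union_distrib_left, inter_eq_left.2 hS]

theorem sum_powerset_union_of_disjoint {β : Type*} [AddCommMonoid β] {A B : Finset α}
    (h : Disjoint A B) (f : Finset α → Finset α → β) :
    ∑ S ∈ (A ∪ B).powerset, f (S ∩ A) (S ∩ B)
      = ∑ T ∈ A.powerset, ∑ U ∈ B.powerset, f T U := by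
  rw [← sum_product']
  refine sum_nbij' (fun S => (S ∩ A, S ∩ B)) (fun q => q.1 ∪ q.2) ?_ ?_ ?_ ?_ fun _ _ => rfl
  · simp only [mem_product, mem_powerset]
    exact fun _ _ => ⟨inter_subset_right, inter_subset_right⟩
  · simp only [mem_product, mem_powerset]
    exact fun q hq => union_subset_union hq.1 hq.2
  · intro S hS
    rw [mem_powerset] at hS
    exact (inter_union_distrib_left S A B).symm.trans (inter_eq_left.2 hS)
  · intro q hq
    simp only [mem_product, mem_powerset] at hq
    rw [union_inter_left_of_disjoint h hq.1 hq.2, union_comm,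
      union_inter_left_of_disjoint h.symm hq.2 hq.1]

theorem sum_powerset_union_card_inter {β : Type*} [AddCommMonoid β] {A B : Finset α}
    (h : Disjoint A B) (F : ℕ → ℕ → β) :
    ∑ S ∈ (A ∪ B).powerset, F (S ∩ A).card (S ∩ B).card
      = ∑ i ∈ range (A.card + 1), ∑ j ∈ range (B.card + 1),
          (A.card.choose i * B.card.choose j) • F i j := by
  rw [sum_powerset_union_of_disjoint h fun T U => F T.card U.card,
    sum_powerset_apply_card fun i => ∑ U ∈ B.powerset, F i U.card]
  refine sum_congr rfl fun i _ => ?_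
  rw [sum_powerset_apply_card, smul_sum]
  simp only [mul_smul]

theorem mvGame_insert_sub_mvGame (C : ℕ) {P W S : Finset α} (hPW : Disjoint P W)
    (hS : S ⊆ P ∪ W) {j : α} (hj : j ∈ P) (hjS : j ∉ S) :
    mvGame C P W (insert j S) - mvGame C P W S = psi C (S ∩ P).card (S ∩ W).card := by
  have hcard := card_inter_add_card_inter_of_subset_union hPW hS
  have hcardP : (insert j S ∩ P).card = (S ∩ P).card + 1 := by
    rw [insert_inter_of_mem hj, card_insert_of_notMem fun h => hjS (mem_inter.1 h).1]
  rw [mvGame, mvGame, if_neg (insert_ne_empty j S), hcardP, card_insert_of_notMem hjS, psi,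
    hcard]
  split_ifs with hS_empty hS_card hS_card
  · simp [hS_empty]
  · exact absurd (card_eq_zero.2 hS_empty) hS_card
  · exact absurd (card_eq_zero.1 hS_card) hS_empty
  · rw [← hcard]
    push_cast
    ring

end

theorem stmt_0_general {α : Type*} [DecidableEq α] (C : ℕ)
    (P W : Finset α) (hPW : Disjoint P W)
    (lam : α) (hlam : lam ∈ P) :
    shapley (P ∪ W) (mvGame C P W) lam = SVpos C P.card W.card := by
  set A := P.erase lam
  have hAW : Disjoint A W := hPW.mono_left (erase_subset _ _)
  have hP : P.card = A.card + 1 := (card_erase_add_one hlam).symm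
  have hcoalitions : (P ∪ W).erase lam = A ∪ W := by
    rw [erase_union_distrib, erase_eq_of_notMem (disjoint_left.1 hPW hlam)]
  have hmarginal : ∀ S ∈ (A ∪ W).powerset,
      (mvGame C P W (insert lam S) - mvGame C P W S) / ((P ∪ W).card - 1).choose S.card
        = psi C (S ∩ A).card (S ∩ W).card
            / (A.card + W.card).choose ((S ∩ A).card + (S ∩ W).card) := by
    intro S hS
    have hSA : S ⊆ A ∪ W := mem_powerset.1 hS
    have hlamS : lam ∉ S := fun h => by
      simpa [A, disjoint_left.1 hPW hlam] using hSA h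
    rw [mvGame_insert_sub_mvGame C hPW (hSA.trans (union_subset_union_left (erase_subset _ _)))
        hlam hlamS, card_inter_add_card_inter_of_subset_union hAW hSA, inter_erase,
      erase_eq_of_notMem fun h => hlamS (mem_inter.1 h).1, card_union_of_disjoint hPW, hP,
      Nat.add_right_comm, Nat.add_sub_cancel]
  rw [shapley, hcoalitions, sum_congr rfl hmarginal,
    sum_powerset_union_card_inter hAW fun i j => psi C i j / (A.card + W.card).choose (i + j),
    SVpos, card_union_of_disjoint hPW, hP, Nat.add_right_comm, Nat.add_sub_cancel,
    Nat.add_sub_cancel]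
  push_cast
  congr 1
  · ring
  refine sum_congr rfl fun i _ => sum_congr rfl fun j _ => ?_
  rw [nsmul_eq_mul]
  push_cast
  ring

/-- In the MV single-point game with `p ≥ 1` correct players and `w ≥ 0` incorrect players,
the Shapley value of every correct player equals `SV⁺_{p,w}`. -/
theorem stmt_0 {α : Type*} [DecidableEq α] (C : ℕ) (hC : 2 ≤ C)
    (P W : Finset α) (hPW : Disjoint P W) (hp : 1 ≤ P.card)
    (lam : α) (hlam : lam ∈ P) :
    shapley (P ∪ W) (mvGame C P W) lam = SVpos C P.card W.card :=
  stmt_0_general C P W hPW lam hlam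
end

section
/- In the MV single-point game with p ≥ 1 correct players and w ≥ 0 incorrect players, the Shapley value of every correct player equals Σ_{i=0}^{p−1} Σ_{j=0}^{w} ψ(i, j) · binom(p−1, i) · binom(w, j) · (i+j)! · (p+w−1−i−j)! / (p+w)!. -/
open Finset

lemma mv_aux_union_sum {α : Type*} [DecidableEq α] {A B : Finset α} (h : Disjoint A B)
    (f : Finset α → ℝ) :
    ∑ S ∈ (A ∪ B).powerset, f S = ∑ s ∈ A.powerset, ∑ t ∈ B.powerset, f (s ∪ t) := by
  rw [← Finset.sum_product']
  refine Finset.sum_nbij' (fun S => (S ∩ A, S ∩ B)) (fun p => p.1 ∪ p.2) ?_ ?_ ?_ ?_ ?_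
  · intro S hS
    simp only [Finset.mem_product, Finset.mem_powerset]
    exact ⟨Finset.inter_subset_right, Finset.inter_subset_right⟩
  · intro p hp
    simp only [Finset.mem_product, Finset.mem_powerset] at hp ⊢
    exact Finset.union_subset_union hp.1 hp.2
  · intro S hS
    rw [Finset.mem_powerset] at hS
    simp only
    rw [← Finset.inter_union_distrib_left, Finset.inter_eq_left.mpr hS]
  · intro p hp
    simp only [Finset.mem_product, Finset.mem_powerset] at hp
    have h1 : (p.1 ∪ p.2) ∩ A = p.1 := by
      ext x
      simp only [Finset.mem_inter, Finset.mem_union]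
      constructor
      · rintro ⟨hx | hx, hxA⟩
        · exact hx
        · exact absurd hxA (Finset.disjoint_left.mp h.symm (hp.2 hx))
      · intro hx
        exact ⟨Or.inl hx, hp.1 hx⟩
    have h2 : (p.1 ∪ p.2) ∩ B = p.2 := by
      ext x
      simp only [Finset.mem_inter, Finset.mem_union]
      constructor
      · rintro ⟨hx | hx, hxB⟩
        · exact absurd hxB (Finset.disjoint_left.mp h (hp.1 hx))
        · exact hx
      · intro hx
        exact ⟨Or.inr hx, hp.2 hx⟩
    simp only [Prod.ext_iff]
    exact ⟨h1, h2⟩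
  · intro S hS
    rw [Finset.mem_powerset] at hS
    simp only
    rw [← Finset.inter_union_distrib_left, Finset.inter_eq_left.mpr hS]

lemma mv_marginal {α : Type*} [DecidableEq α] (C : ℕ) (P W : Finset α)
    (hPW : Disjoint P W) (lam : α) (hlam : lam ∈ P) (s t : Finset α)
    (hs : s ⊆ P.erase lam) (ht : t ⊆ W) :
    mvGame C P W (insert lam (s ∪ t)) - mvGame C P W (s ∪ t) = psi C s.card t.card := by
  have hsP : s ⊆ P := hs.trans (erase_subset _ _)
  have hlams : lam ∉ s := fun hx => (notMem_erase lam P) (hs hx)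
  have hlamt : lam ∉ t := fun hx => disjoint_left.mp hPW hlam (ht hx)
  have hst : Disjoint s t := hPW.mono hsP ht
  have hlamst : lam ∉ s ∪ t := by simp [hlams, hlamt]
  have hcardst : (s ∪ t).card = s.card + t.card := card_union_of_disjoint hst
  have hinter : (s ∪ t) ∩ P = s := by
    ext x
    simp only [mem_inter, mem_union]
    constructor
    · rintro ⟨hx | hx, hxP⟩
      · exact hx
      · exact absurd hxP (disjoint_left.mp hPW.symm (ht hx))
    · intro hx
      exact ⟨Or.inl hx, hsP hx⟩
  have hins_inter : insert lam (s ∪ t) ∩ P = insert lam s := by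
    rw [insert_inter_of_mem hlam, hinter]
  have hins_card : (insert lam (s ∪ t)).card = s.card + t.card + 1 := by
    rw [card_insert_of_notMem hlamst, hcardst]
  have hs_card : (insert lam s).card = s.card + 1 := card_insert_of_notMem hlams
  unfold mvGame psi
  rw [if_neg (insert_ne_empty _ _), hins_inter, hins_card, hs_card]
  by_cases h0 : s.card + t.card = 0
  · have hse : s ∪ t = ∅ := by
      rw [← card_eq_zero, hcardst]; exact h0
    rw [if_pos hse, if_pos h0]
    have : s.card = 0 ∧ t.card = 0 := by omega
    rw [this.1, this.2]
    norm_num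
  · have hne : s ∪ t ≠ ∅ := fun he => h0 (by rw [← hcardst, he, card_empty])
    rw [if_neg hne, if_neg h0, hinter, hcardst]
    push_cast
    ring

lemma mv_count (p w i j : ℕ) (hp : 1 ≤ p) (hi : i ≤ p - 1) (hj : j ≤ w) (x : ℝ) :
    (1 / ((p + w : ℕ) : ℝ)) *
      (((p - 1).choose i : ℝ) * ((w.choose j : ℝ) * (x / ((p + w - 1).choose (i + j) : ℝ)))) =
    x * ((p - 1).choose i : ℝ) * (w.choose j : ℝ) * ((i + j).factorial : ℝ) *
      ((p + w - 1 - i - j).factorial : ℝ) / ((p + w).factorial : ℝ) := by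
  have hk : i + j ≤ p + w - 1 := by omega
  have h1 : (p + w - 1).choose (i + j) * (i + j).factorial * (p + w - 1 - (i + j)).factorial
      = (p + w - 1).factorial := Nat.choose_mul_factorial_mul_factorial hk
  have h2 : (p + w).factorial = (p + w) * (p + w - 1).factorial := by
    obtain ⟨m, hm⟩ : ∃ m, p + w = m + 1 := ⟨p + w - 1, by omega⟩
    rw [hm]
    simp [Nat.factorial_succ]
  have key : ((p + w).factorial : ℝ) = ((p + w : ℕ) : ℝ) *
      (((p + w - 1).choose (i + j) : ℝ) * ((i + j).factorial : ℝ) *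
        ((p + w - 1 - i - j).factorial : ℝ)) := by
    have hn : (p + w).factorial = (p + w) *
        ((p + w - 1).choose (i + j) * (i + j).factorial * (p + w - 1 - (i + j)).factorial) := by
      rw [h1, ← h2]
    rw [Nat.sub_sub]
    exact_mod_cast hn
  have hch : ((p + w - 1).choose (i + j) : ℝ) ≠ 0 :=
    Nat.cast_ne_zero.mpr (Nat.choose_pos hk).ne'
  have hpw : ((p + w : ℕ) : ℝ) ≠ 0 := Nat.cast_ne_zero.mpr (by omega)
  have hf1 : ((i + j).factorial : ℝ) ≠ 0 := Nat.cast_ne_zero.mpr (Nat.factorial_ne_zero _)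
  have hf2 : ((p + w - 1 - i - j).factorial : ℝ) ≠ 0 :=
    Nat.cast_ne_zero.mpr (Nat.factorial_ne_zero _)
  rw [key]
  field_simp

/-- In the MV single-point game with `p ≥ 1` correct players and `w ≥ 0` incorrect players,
the Shapley value of every correct player equals the permutation-enumeration expression
`Σ_{i=0}^{p−1} Σ_{j=0}^{w} ψ(i,j)·C(p−1,i)·C(w,j)·(i+j)!·(p+w−1−i−j)! / (p+w)!`. -/
theorem stmt_1 {α : Type*} [DecidableEq α] (C : ℕ) (hC : 2 ≤ C)
    (P W : Finset α) (hPW : Disjoint P W) (hp : 1 ≤ P.card)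
    (lam : α) (hlam : lam ∈ P) :
    shapley (P ∪ W) (mvGame C P W) lam =
      ∑ i ∈ Finset.range P.card, ∑ j ∈ Finset.range (W.card + 1),
        psi C i j * ((P.card - 1).choose i : ℝ) * (W.card.choose j : ℝ) *
          ((i + j).factorial : ℝ) * ((P.card + W.card - 1 - i - j).factorial : ℝ) /
          ((P.card + W.card).factorial : ℝ) := by
  classical
  have hlamW : lam ∉ W := disjoint_left.mp hPW hlam
  have hErase : (P ∪ W).erase lam = (P.erase lam) ∪ W := by
    rw [erase_union_distrib, erase_eq_of_notMem hlamW]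
  have hAW : Disjoint (P.erase lam) W := hPW.mono_left (erase_subset _ _)
  have hAcard : (P.erase lam).card = P.card - 1 := card_erase_of_mem hlam
  have hm : (P ∪ W).card = P.card + W.card := card_union_of_disjoint hPW
  rw [shapley, hm, hErase, mv_aux_union_sum hAW]
  have step1 : ∀ s ∈ (P.erase lam).powerset,
      ∑ t ∈ W.powerset,
        (mvGame C P W (insert lam (s ∪ t)) - mvGame C P W (s ∪ t)) /
          ((P.card + W.card - 1).choose (s ∪ t).card : ℝ)
      = ∑ j ∈ Finset.range (W.card + 1),
          W.card.choose j •
            (psi C s.card j / ((P.card + W.card - 1).choose (s.card + j) : ℝ)) := by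
    intro s hs
    rw [mem_powerset] at hs
    rw [← sum_powerset_apply_card
      (fun k => psi C s.card k / ((P.card + W.card - 1).choose (s.card + k) : ℝ))]
    refine sum_congr rfl fun t ht => ?_
    rw [mem_powerset] at ht
    have hst : Disjoint s t := hPW.mono (hs.trans (erase_subset _ _)) ht
    rw [mv_marginal C P W hPW lam hlam s t hs ht, card_union_of_disjoint hst]
  rw [sum_congr rfl step1]
  rw [← sum_powerset_apply_card
    (fun i => ∑ j ∈ Finset.range (W.card + 1),
      W.card.choose j • (psi C i j / ((P.card + W.card - 1).choose (i + j) : ℝ))) |>.symm]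
  rw [hAcard, Nat.sub_add_cancel hp, mul_sum]
  refine sum_congr rfl fun i hi => ?_
  rw [mem_range] at hi
  rw [nsmul_eq_mul, mul_sum, mul_sum]
  refine sum_congr rfl fun j hj => ?_
  rw [mem_range, Nat.lt_succ_iff] at hj
  rw [nsmul_eq_mul]
  exact mv_count P.card W.card i j hp (by omega) hj (psi C i j)
end

section
/- In the MV single-point game with p ≥ 0 correct players and w ≥ 1 incorrect players, the Shapley value of every incorrect player equals SV^-_{p,w} = ( p/(p+w) − 1/C − p · SV^+_{p,w} ) / w (where the term p · SV^+_{p,w} is interpreted as 0 when p = 0). -/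
/-!
Shapley values are efficient: they add up to `v I - v ∅`. Indeed, with `m = #I`, a coalition `T`
occurs `#T` times as `insert j S`, each time with weight `1 / C(m-1, #T-1)`, and `m - #T` times as
`S`, each time with weight `1 / C(m-1, #T)`; these contributions cancel unless `T = I` or `T = ∅`.
In the MV game the marginal contribution of a player to `S` depends only on the numbers of correct
and incorrect players in `S`, so every correct player receives `SV⁺` and all incorrect players
receive the same value, which efficiency then determines.
-/

open Finset

namespace Finset

variable {α M : Type*} [DecidableEq α]

theorem card_eq_card_inter_add_card_inter {A B S : Finset α} (hAB : Disjoint A B)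
    (hS : S ⊆ A ∪ B) : #S = #(S ∩ A) + #(S ∩ B) := by
  rw [← card_union_of_disjoint (hAB.mono inter_subset_right inter_subset_right),
    ← inter_union_distrib_left, inter_eq_left.mpr hS]

theorem sum_powerset_union_of_disjoint [AddCommMonoid M] {A B : Finset α} (hAB : Disjoint A B)
    (g : Finset α → Finset α → M) :
    ∑ S ∈ (A ∪ B).powerset, g (S ∩ A) (S ∩ B) = ∑ T ∈ A.powerset, ∑ U ∈ B.powerset, g T U := by
  rw [← sum_product']
  refine sum_nbij' (fun S ↦ (S ∩ A, S ∩ B)) (fun q ↦ q.1 ∪ q.2) ?_ ?_ ?_ ?_ (fun _ _ ↦ rfl)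
  · grind
  · grind
  · intro S hS
    simp only [mem_powerset] at hS
    rw [← inter_union_distrib_left, inter_eq_left.mpr hS]
  · rintro ⟨T, U⟩ hTU
    simp only [mem_product, mem_powerset] at hTU
    ext x <;> grind [disjoint_left]

theorem sum_powerset_union_card [AddCommMonoid M] {A B : Finset α} (hAB : Disjoint A B)
    (g : ℕ → ℕ → M) :
    ∑ S ∈ (A ∪ B).powerset, g #(S ∩ A) #(S ∩ B) =
      ∑ i ∈ range (#A + 1), ∑ k ∈ range (#B + 1), (#A).choose i • (#B).choose k • g i k := by
  rw [sum_powerset_union_of_disjoint hAB (fun T U ↦ g #T #U)]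
  simp_rw [sum_powerset_apply_card (g _), ← smul_sum]
  exact sum_powerset_apply_card fun i ↦ ∑ k ∈ range (#B + 1), (#B).choose k • g i k

theorem sum_sum_powerset_erase [AddCommMonoid M] (I : Finset α) (f : Finset α → M) :
    ∑ j ∈ I, ∑ S ∈ (I.erase j).powerset, f S = ∑ S ∈ I.powerset, (#I - #S) • f S := by
  rw [sum_comm' (t' := I.powerset) (s' := fun S ↦ I \ S)]
  · refine sum_congr rfl fun S hS ↦ ?_
    rw [sum_const, card_sdiff_of_subset (mem_powerset.mp hS)]
  · intro j S
    simp only [mem_powerset, mem_sdiff, subset_erase]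
    tauto

theorem sum_sum_powerset_erase_insert [AddCommGroup M] (I : Finset α) (f : Finset α → M) :
    ∑ j ∈ I, ∑ S ∈ (I.erase j).powerset, f (insert j S) = ∑ S ∈ I.powerset, #S • f S := by
  have h : ∀ j ∈ I, ∑ S ∈ (I.erase j).powerset, f (insert j S) =
      ∑ S ∈ I.powerset, f S - ∑ S ∈ (I.erase j).powerset, f S := fun j hj ↦ by
    rw [← insert_erase hj, sum_powerset_insert (notMem_erase j I), erase_insert_eq_erase,
      erase_idem, add_sub_cancel_left]
  rw [sum_congr rfl h, sum_sub_distrib, sum_sum_powerset_erase, sum_const, ← sum_nsmul,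
    ← sum_sub_distrib]
  refine sum_congr rfl fun S hS ↦ ?_
  rw [sub_eq_iff_eq_add, ← add_nsmul, Nat.add_sub_cancel' (card_le_card (mem_powerset.mp hS))]

end Finset

theorem Nat.cast_div_choose_pred_sub_cast_div_choose {n t : ℕ} (ht : t ≤ n + 1) :
    (t : ℝ) / n.choose (t - 1) - ((n + 1 - t : ℕ) : ℝ) / n.choose t =
      (if t = n + 1 then (n + 1 : ℝ) else 0) - (if t = 0 then (n + 1 : ℝ) else 0) := by
  rcases t with _ | k
  · simp
  rcases (Nat.lt_succ_iff.mp ht).eq_or_lt with rfl | hk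
  · simp
  have hchoose := Nat.choose_succ_right_eq n k
  rw [if_neg (by omega), if_neg (by omega), sub_zero, sub_eq_zero, Nat.add_sub_cancel,
    Nat.add_sub_add_right, div_eq_div_iff (Nat.cast_ne_zero.mpr (Nat.choose_pos hk.le).ne')
    (Nat.cast_ne_zero.mpr (Nat.choose_pos hk).ne')]
  exact_mod_cast (by linarith : (k + 1) * n.choose (k + 1) = (n - k) * n.choose k)

section Shapley

variable {α : Type*} [DecidableEq α]

theorem sum_shapley (I : Finset α) (v : Finset α → ℝ) : ∑ j ∈ I, shapley I v j = v I - v ∅ := by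
  rcases I.eq_empty_or_nonempty with rfl | hI
  · simp
  obtain ⟨n, hn⟩ : ∃ n, #I = n + 1 := ⟨#I - 1, by have := hI.card_pos; omega⟩
  have hinsert : ∑ j ∈ I, ∑ S ∈ (I.erase j).powerset, v (insert j S) / n.choose #S =
      ∑ T ∈ I.powerset, #T • (v T / n.choose (#T - 1)) := by
    rw [← sum_sum_powerset_erase_insert]
    refine sum_congr rfl fun j _ ↦ sum_congr rfl fun S hS ↦ ?_
    rw [card_insert_of_notMem fun h ↦ notMem_erase j I (mem_powerset.mp hS h), Nat.add_sub_cancel]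
  have hcoef : ∀ T ∈ I.powerset,
      #T • (v T / n.choose (#T - 1)) - (#I - #T) • (v T / n.choose #T) =
        ((if T = I then (n + 1 : ℝ) else 0) - (if T = ∅ then (n + 1 : ℝ) else 0)) * v T := by
    intro T hT
    have hsub := mem_powerset.mp hT
    have hcard := card_le_card hsub
    have hT_eq : T = I ↔ #T = n + 1 :=
      ⟨fun h ↦ h ▸ hn, fun h ↦ eq_of_subset_of_card_le hsub (by omega)⟩
    have key := Nat.cast_div_choose_pred_sub_cast_div_choose (n := n) (t := #T) (by omega)
    simp only [← hT_eq, card_eq_zero] at key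
    rw [← key, hn, nsmul_eq_mul, nsmul_eq_mul]
    ring
  calc ∑ j ∈ I, shapley I v j
      = 1 / #I * (∑ T ∈ I.powerset, #T • (v T / n.choose (#T - 1)) -
          ∑ T ∈ I.powerset, (#I - #T) • (v T / n.choose #T)) := by
        simp only [shapley, ← mul_sum, sub_div, sum_sub_distrib, hn, Nat.add_sub_cancel, hinsert,
          sum_sum_powerset_erase]
    _ = v I - v ∅ := by
        rw [← sum_sub_distrib, sum_congr rfl hcoef]
        simp only [sub_mul, ite_mul, zero_mul, sum_sub_distrib, sum_ite_eq', sum_ite_eq',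
          if_pos (mem_powerset_self I), if_pos (empty_mem_powerset I), hn]
        field_simp
        push_cast
        ring

theorem shapley_eq_sum_choose {I A B : Finset α} {v : Finset α → ℝ} {j : α} (hAB : Disjoint A B)
    (hI : I.erase j = A ∪ B) (f : ℕ → ℕ → ℝ)
    (hf : ∀ S ⊆ A ∪ B, v (insert j S) - v S = f #(S ∩ A) #(S ∩ B)) :
    shapley I v j = 1 / #I * ∑ i ∈ range (#A + 1), ∑ k ∈ range (#B + 1),
      f i k * (#A).choose i * (#B).choose k / (#I - 1).choose (i + k) := by
  rw [shapley, hI]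
  congr 1
  calc ∑ S ∈ (A ∪ B).powerset, (v (insert j S) - v S) / (#I - 1).choose #S
      = ∑ S ∈ (A ∪ B).powerset, f #(S ∩ A) #(S ∩ B) / (#I - 1).choose (#(S ∩ A) + #(S ∩ B)) := by
        refine sum_congr rfl fun S hS ↦ ?_
        rw [hf S (mem_powerset.mp hS), ← card_eq_card_inter_add_card_inter hAB (mem_powerset.mp hS)]
    _ = _ := by
        rw [sum_powerset_union_card hAB fun i k ↦ f i k / (#I - 1).choose (i + k)]
        simp only [nsmul_eq_mul]
        refine sum_congr rfl fun i _ ↦ sum_congr rfl fun k _ ↦ ?_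
        ring

end Shapley

noncomputable def mvUtility (C i k : ℕ) : ℝ :=
  if i + k = 0 then 0 else (i : ℝ) / (i + k) - 1 / C

theorem psi_eq_mvUtility_sub (C i k : ℕ) : psi C i k = mvUtility C (i + 1) k - mvUtility C i k := by
  unfold psi mvUtility
  rcases Nat.eq_zero_or_pos (i + k) with h | h
  · obtain ⟨rfl, rfl⟩ : i = 0 ∧ k = 0 := by omega
    norm_num
  · rw [if_neg h.ne', if_neg (by omega), if_neg h.ne']
    push_cast
    ring

section mvGame

variable {α : Type*} [DecidableEq α] {C : ℕ} {P W : Finset α}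

theorem mvGame_eq_mvUtility (hPW : Disjoint P W) {S : Finset α} (hS : S ⊆ P ∪ W) :
    mvGame C P W S = mvUtility C #(S ∩ P) #(S ∩ W) := by
  rw [mvGame, mvUtility, ← card_eq_card_inter_add_card_inter hPW hS]
  simp only [card_eq_zero]
  rw [card_eq_card_inter_add_card_inter hPW hS, Nat.cast_add]

theorem mvGame_insert_sub_of_mem_left (hPW : Disjoint P W) {j : α} (hj : j ∈ P) {S : Finset α}
    (hS : S ⊆ P.erase j ∪ W) :
    mvGame C P W (insert j S) - mvGame C P W S = psi C #(S ∩ P.erase j) #(S ∩ W) := by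
  have hjW : j ∉ W := disjoint_left.mp hPW hj
  have hjS : j ∉ S := fun h ↦ by simpa [hjW] using hS h
  have hSPW : S ⊆ P ∪ W := hS.trans (union_subset_union_left (erase_subset j P))
  rw [mvGame_eq_mvUtility hPW hSPW, mvGame_eq_mvUtility hPW (insert_subset (by simp [hj]) hSPW),
    psi_eq_mvUtility_sub, insert_inter_of_mem hj, insert_inter_of_notMem hjW, inter_erase,
    erase_eq_of_notMem fun h ↦ hjS (mem_inter.mp h).1,
    card_insert_of_notMem fun h ↦ hjS (mem_inter.mp h).1]

theorem mvGame_insert_sub_of_mem_right (hPW : Disjoint P W) {j : α} (hj : j ∈ W) {S : Finset α}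
    (hS : S ⊆ P ∪ W.erase j) :
    mvGame C P W (insert j S) - mvGame C P W S =
      mvUtility C #(S ∩ P) (#(S ∩ W.erase j) + 1) - mvUtility C #(S ∩ P) #(S ∩ W.erase j) := by
  have hjP : j ∉ P := disjoint_right.mp hPW hj
  have hjS : j ∉ S := fun h ↦ by simpa [hjP] using hS h
  have hSPW : S ⊆ P ∪ W := hS.trans (union_subset_union_right (erase_subset j W))
  rw [mvGame_eq_mvUtility hPW hSPW, mvGame_eq_mvUtility hPW (insert_subset (by simp [hj]) hSPW),
    insert_inter_of_mem hj, insert_inter_of_notMem hjP, inter_erase,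
    erase_eq_of_notMem fun h ↦ hjS (mem_inter.mp h).1,
    card_insert_of_notMem fun h ↦ hjS (mem_inter.mp h).1]

theorem shapley_mvGame_of_mem_left (hPW : Disjoint P W) {j : α} (hj : j ∈ P) :
    shapley (P ∪ W) (mvGame C P W) j = SVpos C #P #W := by
  have hI : (P ∪ W).erase j = P.erase j ∪ W := by
    rw [erase_union_distrib, erase_eq_of_notMem (disjoint_left.mp hPW hj)]
  rw [shapley_eq_sum_choose (hPW.mono_left (erase_subset j P)) hI (psi C)
      fun S hS ↦ mvGame_insert_sub_of_mem_left hPW hj hS,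
    card_erase_of_mem hj, Nat.sub_add_cancel (card_pos.mpr ⟨j, hj⟩), card_union_of_disjoint hPW,
    SVpos, Nat.cast_add]

theorem shapley_mvGame_eq_of_mem_right (hPW : Disjoint P W) {j k : α} (hj : j ∈ W) (hk : k ∈ W) :
    shapley (P ∪ W) (mvGame C P W) j = shapley (P ∪ W) (mvGame C P W) k := by
  have key : ∀ l ∈ W, shapley (P ∪ W) (mvGame C P W) l =
      1 / #(P ∪ W) * ∑ i ∈ range (#P + 1), ∑ m ∈ range (#W - 1 + 1),
        (mvUtility C i (m + 1) - mvUtility C i m) * (#P).choose i * (#W - 1).choose m /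
          (#(P ∪ W) - 1).choose (i + m) := fun l hl ↦ by
    have hI : (P ∪ W).erase l = P ∪ W.erase l := by
      rw [erase_union_distrib, erase_eq_of_notMem (disjoint_right.mp hPW hl)]
    rw [shapley_eq_sum_choose (hPW.mono_right (erase_subset l W)) hI
        (fun i m ↦ mvUtility C i (m + 1) - mvUtility C i m)
        fun S hS ↦ mvGame_insert_sub_of_mem_right hPW hl hS, card_erase_of_mem hl]
  rw [key j hj, key k hk]

theorem mvGame_union (hPW : Disjoint P W) (hne : (P ∪ W).Nonempty) :
    mvGame C P W (P ∪ W) = #P / (#P + #W) - 1 / C := by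
  rw [mvGame, if_neg hne.ne_empty, union_inter_cancel_left, card_union_of_disjoint hPW,
    Nat.cast_add]

end mvGame

theorem stmt_6_general {α : Type*} [DecidableEq α] (C : ℕ)
    (P W : Finset α) (hPW : Disjoint P W)
    (lam : α) (hlam : lam ∈ W) :
    shapley (P ∪ W) (mvGame C P W) lam = SVneg C P.card W.card := by
  have hsum := sum_shapley (P ∪ W) (mvGame C P W)
  rw [sum_union hPW, sum_congr rfl fun j hj ↦ shapley_mvGame_of_mem_left hPW hj,
    sum_congr rfl fun k hk ↦ shapley_mvGame_eq_of_mem_right hPW hk hlam, sum_const, sum_const,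
    nsmul_eq_mul, nsmul_eq_mul, mvGame_union hPW ⟨lam, mem_union_right P hlam⟩,
    show mvGame C P W ∅ = 0 from if_pos rfl] at hsum
  have hW : (#W : ℝ) ≠ 0 := Nat.cast_ne_zero.mpr (card_pos.mpr ⟨lam, hlam⟩).ne'
  rw [SVneg, eq_div_iff hW]
  linarith

/-- In the MV single-point game with `p ≥ 0` correct players and `w ≥ 1` incorrect players,
the Shapley value of every incorrect player equals
`SV⁻_{p,w} = (p/(p+w) − 1/C − p·SV⁺_{p,w}) / w` (note `SVpos C 0 w = 0` by definition,
so `p·SV⁺_{p,w}` is `0` when `p = 0`). -/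
theorem stmt_6 {α : Type*} [DecidableEq α] (C : ℕ) (hC : 2 ≤ C)
    (P W : Finset α) (hPW : Disjoint P W) (hw : 1 ≤ W.card)
    (lam : α) (hlam : lam ∈ W) :
    shapley (P ∪ W) (mvGame C P W) lam = SVneg C P.card W.card :=
  stmt_6_general C P W hPW lam hlam
end

section
/- For all integers p ≥ 1 and w ≥ 1, the quantity SV^+_{p,w} satisfies the recursion SV^+_{p,w} = ψ(p−1, w)/(p+w) + ((p−1)/(p+w)) · SV^+_{p−1,w} + (w/(p+w)) · SV^+_{p,w−1}, where SV^+_{0,w} is interpreted as 0. -/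
open Finset

lemma nat_key (P W i j : ℕ) (hi : i ≤ P) (hj : j ≤ W + 1) :
    P * ((P-1).choose i) * ((W+1).choose j) * ((P+W+1).choose (i+j))
      + (W+1) * (P.choose i) * (W.choose j) * ((P+W+1).choose (i+j))
    = (P+W+1) * ((P+W).choose (i+j)) * (P.choose i) * ((W+1).choose j) := by
  have e1 : P * (P-1).choose i = (P - i) * P.choose i := by
    cases P with
    | zero => simp [Nat.le_zero.mp hi]
    | succ P' => simpa [Nat.mul_comm] using Nat.choose_mul_succ_eq P' i
  have e2 : (W+1) * W.choose j = (W+1-j) * (W+1).choose j := by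
    simpa [Nat.mul_comm] using Nat.choose_mul_succ_eq W j
  have e3 : (P+W+1) * (P+W).choose (i+j) = (P+W+1-(i+j)) * (P+W+1).choose (i+j) := by
    simpa [Nat.mul_comm, Nat.add_assoc] using Nat.choose_mul_succ_eq (P+W) (i+j)
  have hsplit : P + W + 1 - (i+j) = (P - i) + (W + 1 - j) := by omega
  calc P * ((P-1).choose i) * ((W+1).choose j) * ((P+W+1).choose (i+j))
      + (W+1) * (P.choose i) * (W.choose j) * ((P+W+1).choose (i+j))
      = (P * (P-1).choose i) * (((W+1).choose j) * ((P+W+1).choose (i+j)))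
        + ((W+1) * W.choose j) * ((P.choose i) * ((P+W+1).choose (i+j))) := by ring
    _ = ((P-i) * P.choose i) * (((W+1).choose j) * ((P+W+1).choose (i+j)))
        + ((W+1-j) * (W+1).choose j) * ((P.choose i) * ((P+W+1).choose (i+j))) := by
        rw [e1, e2]
    _ = ((P-i) + (W+1-j)) * (P.choose i * ((W+1).choose j) * ((P+W+1).choose (i+j))) := by ring
    _ = ((P+W+1-(i+j)) * ((P+W+1).choose (i+j))) * (P.choose i * ((W+1).choose j)) := by
        rw [hsplit]; ring
    _ = ((P+W+1) * (P+W).choose (i+j)) * (P.choose i * ((W+1).choose j)) := by rw [← e3]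
    _ = _ := by ring

lemma real_key (P W i j : ℕ) (hi : i ≤ P) (hj : j ≤ W + 1) (hc : i + j ≤ P + W) :
    (P.choose i : ℝ) * ((W+1).choose j : ℝ) / ((P+W+1).choose (i+j) : ℝ)
    = (P : ℝ) / ((P : ℝ) + W + 1) *
        (((P-1).choose i : ℝ) * ((W+1).choose j : ℝ) / ((P+W).choose (i+j) : ℝ))
      + ((W : ℝ) + 1) / ((P : ℝ) + W + 1) *
        ((P.choose i : ℝ) * (W.choose j : ℝ) / ((P+W).choose (i+j) : ℝ)) := by
  have h3 : ((P+W).choose (i+j) : ℝ) ≠ 0 := by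
    exact_mod_cast (Nat.choose_pos hc).ne'
  have h4 : ((P+W+1).choose (i+j) : ℝ) ≠ 0 := by
    exact_mod_cast (Nat.choose_pos (by omega)).ne'
  have h5 : (P : ℝ) + W + 1 ≠ 0 := by positivity
  have key := congrArg (Nat.cast : ℕ → ℝ) (nat_key P W i j hi hj)
  push_cast at key
  field_simp
  linear_combination -key

lemma sum_key (C P W : ℕ) :
    ∑ x ∈ Finset.range (P+1) ×ˢ Finset.range (W+1+1),
        psi C x.1 x.2 * (P.choose x.1 : ℝ) * ((W+1).choose x.2 : ℝ) /
          ((P+W+1).choose (x.1+x.2) : ℝ)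
    = psi C P (W+1)
      + (P:ℝ) / ((P:ℝ) + (W:ℝ) + 1) *
          ∑ x ∈ Finset.range (P+1) ×ˢ Finset.range (W+1+1),
            psi C x.1 x.2 * ((P-1).choose x.1 : ℝ) * ((W+1).choose x.2 : ℝ) /
              ((P+W).choose (x.1+x.2) : ℝ)
      + ((W:ℝ) + 1) / ((P:ℝ) + (W:ℝ) + 1) *
          ∑ x ∈ Finset.range (P+1) ×ˢ Finset.range (W+1+1),
            psi C x.1 x.2 * (P.choose x.1 : ℝ) * (W.choose x.2 : ℝ) /
              ((P+W).choose (x.1+x.2) : ℝ) := by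
  set s := Finset.range (P+1) ×ˢ Finset.range (W+1+1) with hs
  have hc : ((P, W+1) : ℕ × ℕ) ∈ s := by simp [hs]
  have hzero : (P+W).choose (P+(W+1)) = 0 := Nat.choose_eq_zero_of_lt (by omega)
  have hg1c : psi C P (W+1) * ((P-1).choose P : ℝ) * ((W+1).choose (W+1) : ℝ) /
      ((P+W).choose (P+(W+1)) : ℝ) = 0 := by
    rw [hzero]; simp
  have hg2c : psi C P (W+1) * (P.choose P : ℝ) * (W.choose (W+1) : ℝ) /
      ((P+W).choose (P+(W+1)) : ℝ) = 0 := by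
    rw [hzero]; simp
  have hterm : ∀ x ∈ s.erase (P, W+1),
      psi C x.1 x.2 * (P.choose x.1 : ℝ) * ((W+1).choose x.2 : ℝ) /
          ((P+W+1).choose (x.1+x.2) : ℝ)
      = (P:ℝ)/((P:ℝ)+(W:ℝ)+1) *
          (psi C x.1 x.2 * ((P-1).choose x.1 : ℝ) * ((W+1).choose x.2 : ℝ) /
            ((P+W).choose (x.1+x.2) : ℝ))
        + ((W:ℝ)+1)/((P:ℝ)+(W:ℝ)+1) *
          (psi C x.1 x.2 * (P.choose x.1 : ℝ) * (W.choose x.2 : ℝ) /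
            ((P+W).choose (x.1+x.2) : ℝ)) := by
    rintro ⟨i, j⟩ hx
    simp only [hs, Finset.mem_erase, Finset.mem_product, Finset.mem_range, Prod.mk.injEq,
      ne_eq, not_and] at hx
    have hi : i ≤ P := by omega
    have hj : j ≤ W + 1 := by omega
    have hcc : i + j ≤ P + W := by
      rcases hx with ⟨hne, h1, h2⟩
      by_cases hiP : i = P
      · have := hne hiP; omega
      · omega
    have hk := real_key P W i j hi hj hcc
    calc psi C i j * (P.choose i : ℝ) * ((W+1).choose j : ℝ) / ((P+W+1).choose (i+j) : ℝ)
        = psi C i j * ((P.choose i : ℝ) * ((W+1).choose j : ℝ) /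
            ((P+W+1).choose (i+j) : ℝ)) := by ring
      _ = psi C i j * ((P : ℝ) / ((P : ℝ) + W + 1) *
            (((P-1).choose i : ℝ) * ((W+1).choose j : ℝ) / ((P+W).choose (i+j) : ℝ))
          + ((W : ℝ) + 1) / ((P : ℝ) + W + 1) *
            ((P.choose i : ℝ) * (W.choose j : ℝ) / ((P+W).choose (i+j) : ℝ))) := by rw [hk]
      _ = _ := by ring
  have hF : ∑ x ∈ s, psi C x.1 x.2 * (P.choose x.1 : ℝ) * ((W+1).choose x.2 : ℝ) /
        ((P+W+1).choose (x.1+x.2) : ℝ)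
      = (∑ x ∈ s.erase (P, W+1),
          psi C x.1 x.2 * (P.choose x.1 : ℝ) * ((W+1).choose x.2 : ℝ) /
            ((P+W+1).choose (x.1+x.2) : ℝ))
        + psi C P (W+1) := by
    rw [← Finset.sum_erase_add s _ hc]
    congr 1
    have : (P+W+1).choose (P+(W+1)) = 1 := by
      rw [show P+(W+1) = P+W+1 by omega, Nat.choose_self]
    simp [this, Nat.choose_self]
  rw [hF, Finset.sum_congr rfl hterm, Finset.sum_add_distrib, ← Finset.mul_sum, ← Finset.mul_sum,
    Finset.sum_erase s hg1c, Finset.sum_erase s hg2c]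
  ring

/-- Recursion for `SV⁺_{p,w}` (with `SVpos C 0 w = 0` by definition). -/
theorem stmt_7 (C : ℕ) (hC : 2 ≤ C) (p w : ℕ) (hp : 1 ≤ p) (hw : 1 ≤ w) :
    SVpos C p w =
      psi C (p - 1) w / ((p : ℝ) + (w : ℝ)) +
        (((p : ℝ) - 1) / ((p : ℝ) + (w : ℝ))) * SVpos C (p - 1) w +
        ((w : ℝ) / ((p : ℝ) + (w : ℝ))) * SVpos C p (w - 1) := by
  obtain ⟨P, rfl⟩ : ∃ P, p = P + 1 := ⟨p - 1, by omega⟩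
  obtain ⟨W, rfl⟩ : ∃ W, w = W + 1 := ⟨w - 1, by omega⟩
  have e1 : P + 1 - 1 = P := rfl
  have e2 : P + 1 + (W+1) - 1 = P + W + 1 := by omega
  have e3 : P + (W+1) - 1 = P + W := by omega
  have e4 : P + 1 + W - 1 = P + W := by omega
  have e5 : W + 1 - 1 = W := rfl
  simp only [SVpos, e1, e2, e3, e4, e5]
  have conv1 : (∑ i ∈ Finset.range (P+1), ∑ j ∈ Finset.range (W+1+1),
        psi C i j * (P.choose i : ℝ) * ((W+1).choose j : ℝ) / ((P+W+1).choose (i+j) : ℝ))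
      = ∑ x ∈ Finset.range (P+1) ×ˢ Finset.range (W+1+1),
        psi C x.1 x.2 * (P.choose x.1 : ℝ) * ((W+1).choose x.2 : ℝ) /
          ((P+W+1).choose (x.1+x.2) : ℝ) := (Finset.sum_product' _ _ _).symm
  have convA : (∑ i ∈ Finset.range (P+1), ∑ j ∈ Finset.range (W+1+1),
        psi C i j * ((P-1).choose i : ℝ) * ((W+1).choose j : ℝ) /
          ((P+W).choose (i+j) : ℝ))
      = ∑ x ∈ Finset.range (P+1) ×ˢ Finset.range (W+1+1),
        psi C x.1 x.2 * ((P-1).choose x.1 : ℝ) * ((W+1).choose x.2 : ℝ) /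
          ((P+W).choose (x.1+x.2) : ℝ) := (Finset.sum_product' _ _ _).symm
  have convB : (∑ i ∈ Finset.range (P+1), ∑ j ∈ Finset.range (W+1+1),
        psi C i j * (P.choose i : ℝ) * (W.choose j : ℝ) /
          ((P+W).choose (i+j) : ℝ))
      = ∑ x ∈ Finset.range (P+1) ×ˢ Finset.range (W+1+1),
        psi C x.1 x.2 * (P.choose x.1 : ℝ) * (W.choose x.2 : ℝ) /
          ((P+W).choose (x.1+x.2) : ℝ) := (Finset.sum_product' _ _ _).symm
  have hg1 : (P:ℝ) * (∑ x ∈ Finset.range (P+1) ×ˢ Finset.range (W+1+1),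
        psi C x.1 x.2 * ((P-1).choose x.1 : ℝ) * ((W+1).choose x.2 : ℝ) /
          ((P+W).choose (x.1+x.2) : ℝ))
      = (P:ℝ) * ∑ i ∈ Finset.range P, ∑ j ∈ Finset.range (W+1+1),
        psi C i j * ((P-1).choose i : ℝ) * ((W+1).choose j : ℝ) /
          ((P+W).choose (i+j) : ℝ) := by
    rw [← convA, Finset.sum_range_succ]
    rcases Nat.eq_zero_or_pos P with hP | hP
    · simp [hP]
    · have h0 : (P-1).choose P = 0 := Nat.choose_eq_zero_of_lt (by omega)
      simp [h0]
  have hg2 : (∑ x ∈ Finset.range (P+1) ×ˢ Finset.range (W+1+1),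
        psi C x.1 x.2 * (P.choose x.1 : ℝ) * (W.choose x.2 : ℝ) /
          ((P+W).choose (x.1+x.2) : ℝ))
      = ∑ i ∈ Finset.range (P+1), ∑ j ∈ Finset.range (W+1),
        psi C i j * (P.choose i : ℝ) * (W.choose j : ℝ) / ((P+W).choose (i+j) : ℝ) := by
    rw [← convB]
    refine Finset.sum_congr rfl fun i _ => ?_
    rw [Finset.sum_range_succ]
    simp [Nat.choose_succ_self]
  rw [conv1, sum_key C P W, hg2]
  set A := ∑ x ∈ Finset.range (P+1) ×ˢ Finset.range (W+1+1),
        psi C x.1 x.2 * ((P-1).choose x.1 : ℝ) * ((W+1).choose x.2 : ℝ) /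
          ((P+W).choose (x.1+x.2) : ℝ) with hA
  set A' := ∑ i ∈ Finset.range P, ∑ j ∈ Finset.range (W+1+1),
        psi C i j * ((P-1).choose i : ℝ) * ((W+1).choose j : ℝ) /
          ((P+W).choose (i+j) : ℝ) with hA'
  set B := ∑ i ∈ Finset.range (P+1), ∑ j ∈ Finset.range (W+1),
        psi C i j * (P.choose i : ℝ) * (W.choose j : ℝ) / ((P+W).choose (i+j) : ℝ) with hB
  have key2 : (P:ℝ)/((P:ℝ)+(W:ℝ)+1) * A = (P:ℝ)/((P:ℝ)+(W:ℝ)+1) * A' := by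
    rw [div_mul_eq_mul_div, div_mul_eq_mul_div, hg1]
  rw [key2]
  push_cast
  have n1 : (P:ℝ) + 1 + ((W:ℝ) + 1) ≠ 0 := by positivity
  have n2 : (P:ℝ) + (W:ℝ) + 1 ≠ 0 := by positivity
  have n3 : (P:ℝ) + ((W:ℝ) + 1) ≠ 0 := by positivity
  have n4 : (P:ℝ) + 1 + (W:ℝ) ≠ 0 := by positivity
  field_simp
  ring
end

section
/- Consider the extended MV single-point game on player set I = P ∪ W ∪ A, where P has p correct players, W has w incorrect players, A has a abstaining players (all pairwise disjoint, p + w ≥ 1), and the utility is v(S) = |S ∩ P| / |S ∩ (P ∪ W)| − 1/C if S ∩ (P ∪ W) ≠ ∅ and v(S) = 0 otherwise. Then the Shapley value of every abstaining player is 0, the Shapley value of every correct player equals SV^+_{p,w}, and (if w ≥ 1) the Shapley value of every incorrect player equals SV^-_{p,w}. -/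
open Finset

/-- The extended MV single-point game, allowing abstaining players `A`: the utility only
looks at the non-abstaining part `S ∩ (P ∪ W)` of the coalition. -/
noncomputable def mvGameExt {α : Type*} [DecidableEq α] (C : ℕ) (P W : Finset α)
    (S : Finset α) : ℝ :=
  if S ∩ (P ∪ W) = ∅ then 0
  else ((S ∩ P).card : ℝ) / ((S ∩ (P ∪ W)).card : ℝ) - 1 / (C : ℝ)


/-- `t! (n-1-t)! / n!`, i.e. `1/(n * C(n-1,t))` for `t ≤ n-1`. -/
noncomputable def Gf (n t : ℕ) : ℝ := (t.factorial : ℝ) * ((n - 1 - t).factorial) / (n.factorial)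

lemma Gf_rec {n t : ℕ} (hn : 1 ≤ n) (ht : t ≤ n - 1) :
    Gf n t = Gf (n + 1) t + Gf (n + 1) (t + 1) := by
  obtain ⟨d, rfl⟩ : ∃ d, n = t + d + 1 := ⟨n - 1 - t, by omega⟩
  simp only [Gf]
  have h1 : t + d + 1 - 1 - t = d := by omega
  have h2 : t + d + 1 + 1 - 1 - t = d + 1 := by omega
  have h3 : t + d + 1 + 1 - 1 - (t + 1) = d := by omega
  rw [h1, h2, h3]
  have e1 : (t + d + 1 + 1) = (t + d + 1) + 1 := rfl
  rw [e1, Nat.factorial_succ (t + d + 1), Nat.factorial_succ d, Nat.factorial_succ t]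
  have h4 : (0:ℝ) < ((t + d + 1).factorial : ℝ) := by positivity
  push_cast
  field_simp
  ring

lemma pascal_sum (a : ℕ) (f : ℕ → ℝ) :
    ∑ k ∈ range (a + 2), ((a+1).choose k : ℝ) * f k
      = ∑ k ∈ range (a + 1), (a.choose k : ℝ) * (f k + f (k + 1)) := by
  have h1 : ∑ k ∈ range (a + 2), ((a+1).choose k : ℝ) * f k
      = (∑ k ∈ range (a + 1), ((a+1).choose (k+1) : ℝ) * f (k+1)) + ((a+1).choose 0 : ℝ) * f 0 :=
    Finset.sum_range_succ' (fun k => ((a+1).choose k : ℝ) * f k) (a+1)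
  have h2 : ∀ k, ((a+1).choose (k+1) : ℝ) = (a.choose k : ℝ) + (a.choose (k+1) : ℝ) := by
    intro k; rw [Nat.choose_succ_succ]; push_cast; ring
  have h3 : (∑ k ∈ range (a + 1), ((a:ℕ).choose (k+1) : ℝ) * f (k+1)) + ((a:ℕ).choose 0 : ℝ) * f 0
      = ∑ k ∈ range (a + 2), (a.choose k : ℝ) * f k :=
    (Finset.sum_range_succ' (fun k => (a.choose k : ℝ) * f k) (a+1)).symm
  have h4 : ∑ k ∈ range (a + 2), (a.choose k : ℝ) * f k
      = ∑ k ∈ range (a + 1), (a.choose k : ℝ) * f k := by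
    rw [Finset.sum_range_succ, Nat.choose_eq_zero_of_lt (by omega)]; simp
  calc ∑ k ∈ range (a + 2), ((a+1).choose k : ℝ) * f k
      = (∑ k ∈ range (a + 1), ((a.choose k : ℝ) + (a.choose (k+1) : ℝ)) * f (k+1))
          + ((a+1).choose 0 : ℝ) * f 0 := by rw [h1]; simp only [h2]
    _ = (∑ k ∈ range (a + 1), (a.choose k : ℝ) * f (k+1))
          + ((∑ k ∈ range (a + 1), ((a:ℕ).choose (k+1) : ℝ) * f (k+1)) + ((a:ℕ).choose 0 : ℝ) * f 0) := by
        have hd : ∀ k ∈ range (a+1), ((a.choose k : ℝ) + (a.choose (k+1) : ℝ)) * f (k+1)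
            = (a.choose k : ℝ) * f (k+1) + (a.choose (k+1) : ℝ) * f (k+1) := fun k _ => add_mul _ _ _
        rw [Finset.sum_congr rfl hd, Finset.sum_add_distrib]
        simp only [Nat.choose_zero_right, Nat.cast_one, one_mul]
        ring
    _ = ∑ k ∈ range (a + 1), (a.choose k : ℝ) * (f k + f (k + 1)) := by
        rw [h3, h4, ← Finset.sum_add_distrib]
        apply Finset.sum_congr rfl; intro k _; ring

lemma Gf_sum (a : ℕ) : ∀ n s : ℕ, 1 ≤ n → s ≤ n - 1 →
    ∑ k ∈ range (a + 1), (a.choose k : ℝ) * Gf (n + a) (s + k) = Gf n s := by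
  induction a with
  | zero => intro n s hn hs; simp
  | succ a ih =>
    intro n s hn hs
    rw [show a + 1 + 1 = a + 2 from rfl,
      pascal_sum a (fun k => Gf (n + (a+1)) (s + k))]
    have : ∀ k ∈ range (a + 1), (a.choose k : ℝ) *
        (Gf (n + (a+1)) (s + k) + Gf (n + (a+1)) (s + (k + 1)))
        = (a.choose k : ℝ) * Gf (n + a) (s + k) := by
      intro k hk
      rw [mem_range] at hk
      have hrec := Gf_rec (n := n + a) (t := s + k) (by omega) (by omega)
      rw [show s + (k+1) = s + k + 1 from (add_assoc s k 1).symm,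
        show n + (a+1) = n + a + 1 from rfl, ← hrec]
    rw [Finset.sum_congr rfl this]
    exact ih n s hn hs

lemma inv_mul_choose {n s : ℕ} (hn : 1 ≤ n) (hs : s ≤ n - 1) :
    1 / ((n : ℝ) * ((n - 1).choose s)) = Gf n s := by
  obtain ⟨m, rfl⟩ : ∃ m, n = m + 1 := ⟨n - 1, by omega⟩
  simp only [Nat.add_sub_cancel] at hs ⊢
  rw [Gf, Nat.cast_choose ℝ hs, Nat.add_sub_cancel, Nat.factorial_succ]
  have h1 : (0:ℝ) < (s.factorial : ℝ) := by positivity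
  have h2 : (0:ℝ) < ((m - s).factorial : ℝ) := by positivity
  have h3 : (0:ℝ) < (m.factorial : ℝ) := by positivity
  push_cast
  field_simp

lemma sum_powerset_union {α : Type*} [DecidableEq α] {s t : Finset α} (hst : Disjoint s t)
    (f : Finset α → ℝ) :
    ∑ S ∈ (s ∪ t).powerset, f S = ∑ u ∈ s.powerset, ∑ v ∈ t.powerset, f (u ∪ v) := by
  rw [← Finset.sum_product']
  apply Finset.sum_nbij' (i := fun S => (S ∩ s, S ∩ t)) (j := fun x => x.1 ∪ x.2)
  · intro S hS
    simp only [Finset.mem_product, mem_powerset]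
    exact ⟨inter_subset_right, inter_subset_right⟩
  · intro x hx
    simp only [Finset.mem_product, mem_powerset] at hx ⊢
    exact union_subset_union hx.1 hx.2
  · intro S hS
    rw [mem_powerset] at hS
    rw [← Finset.inter_union_distrib_left, Finset.inter_eq_left.2 hS]
  · intro x hx
    simp only [Finset.mem_product, mem_powerset] at hx
    have h1 : (x.1 ∪ x.2) ∩ s = x.1 := by
      rw [Finset.union_inter_distrib_right, Finset.inter_eq_left.2 hx.1,
        Finset.disjoint_iff_inter_eq_empty.1 (hst.symm.mono_left hx.2), union_empty]
    have h2 : (x.1 ∪ x.2) ∩ t = x.2 := by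
      rw [Finset.union_inter_distrib_right, Finset.inter_eq_left.2 hx.2,
        Finset.disjoint_iff_inter_eq_empty.1 (hst.mono_left hx.1), empty_union]
    rw [h1, h2]
  · intro S hS
    rw [mem_powerset] at hS
    rw [← Finset.inter_union_distrib_left, Finset.inter_eq_left.2 hS]

lemma sum_powerset_three {α : Type*} [DecidableEq α] {s t u : Finset α}
    (hst : Disjoint s t) (hsu : Disjoint s u) (htu : Disjoint t u)
    (g : ℕ → ℕ → ℕ → ℝ) :
    ∑ S ∈ (s ∪ t ∪ u).powerset, g (S ∩ s).card (S ∩ t).card (S ∩ u).card =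
      ∑ i ∈ range (s.card + 1), ∑ j ∈ range (t.card + 1), ∑ k ∈ range (u.card + 1),
        ((s.card.choose i : ℝ) * (t.card.choose j) * (u.card.choose k)) * g i j k := by
  have hstu : Disjoint (s ∪ t) u := Finset.disjoint_union_left.2 ⟨hsu, htu⟩
  have key : ∑ S ∈ (s ∪ t ∪ u).powerset, g (S ∩ s).card (S ∩ t).card (S ∩ u).card
      = ∑ a ∈ s.powerset, ∑ b ∈ t.powerset, ∑ c ∈ u.powerset, g a.card b.card c.card := by
    rw [sum_powerset_union hstu, sum_powerset_union hst]
    apply Finset.sum_congr rfl; intro a ha; rw [mem_powerset] at ha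
    apply Finset.sum_congr rfl; intro b hb; rw [mem_powerset] at hb
    apply Finset.sum_congr rfl; intro c hc; rw [mem_powerset] at hc
    have e1 : (a ∪ b ∪ c) ∩ s = a := by
      rw [Finset.union_inter_distrib_right, Finset.union_inter_distrib_right,
        Finset.inter_eq_left.2 ha,
        Finset.disjoint_iff_inter_eq_empty.1 (hst.symm.mono_left hb),
        Finset.disjoint_iff_inter_eq_empty.1 (hsu.symm.mono_left hc), union_empty, union_empty]
    have e2 : (a ∪ b ∪ c) ∩ t = b := by
      rw [Finset.union_inter_distrib_right, Finset.union_inter_distrib_right,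
        Finset.inter_eq_left.2 hb,
        Finset.disjoint_iff_inter_eq_empty.1 (hst.mono_left ha),
        Finset.disjoint_iff_inter_eq_empty.1 (htu.symm.mono_left hc), empty_union, union_empty]
    have e3 : (a ∪ b ∪ c) ∩ u = c := by
      rw [Finset.union_inter_distrib_right, Finset.union_inter_distrib_right,
        Finset.inter_eq_left.2 hc,
        Finset.disjoint_iff_inter_eq_empty.1 (hsu.mono_left ha),
        Finset.disjoint_iff_inter_eq_empty.1 (htu.mono_left hb), empty_union, empty_union]
    rw [e1, e2, e3]
  rw [key]
  have step1 : ∀ a ∈ s.powerset, ∀ b ∈ t.powerset,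
      ∑ c ∈ u.powerset, g a.card b.card c.card
        = ∑ k ∈ range (u.card + 1), (u.card.choose k : ℝ) * g a.card b.card k := by
    intro a _ b _
    rw [Finset.sum_powerset_apply_card (fun k => g a.card b.card k)]
    simp [nsmul_eq_mul]
  rw [Finset.sum_congr rfl (fun a ha => Finset.sum_congr rfl (step1 a ha))]
  have step2 : ∀ a ∈ s.powerset,
      ∑ b ∈ t.powerset, ∑ k ∈ range (u.card + 1), (u.card.choose k : ℝ) * g a.card b.card k
        = ∑ j ∈ range (t.card + 1), (t.card.choose j : ℝ) *
            ∑ k ∈ range (u.card + 1), (u.card.choose k : ℝ) * g a.card j k := by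
    intro a _
    rw [Finset.sum_powerset_apply_card
      (fun j => ∑ k ∈ range (u.card + 1), (u.card.choose k : ℝ) * g a.card j k)]
    simp [nsmul_eq_mul]
  rw [Finset.sum_congr rfl step2]
  rw [Finset.sum_powerset_apply_card
    (fun i => ∑ j ∈ range (t.card + 1), (t.card.choose j : ℝ) *
      ∑ k ∈ range (u.card + 1), (u.card.choose k : ℝ) * g i j k)]
  apply Finset.sum_congr rfl; intro i _
  rw [nsmul_eq_mul, Finset.mul_sum]
  apply Finset.sum_congr rfl; intro j _
  rw [Finset.mul_sum, Finset.mul_sum]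
  apply Finset.sum_congr rfl; intro k _
  ring

lemma powerset_erase {α : Type*} [DecidableEq α] (I : Finset α) (j : α) :
    (I.erase j).powerset = I.powerset.filter (fun S => j ∉ S) := by
  ext S
  simp only [mem_powerset, mem_filter, Finset.subset_erase]

lemma shapley_efficiency {α : Type*} [DecidableEq α] (I : Finset α) (v : Finset α → ℝ)
    (hI : I.Nonempty) (hv : v ∅ = 0) :
    ∑ j ∈ I, shapley I v j = v I := by
  classical
  set m := I.card with hm
  have hm1 : 1 ≤ m := Finset.card_pos.2 hI
  simp only [shapley]
  rw [← Finset.mul_sum]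
  have split : ∀ j ∈ I, ∑ S ∈ (I.erase j).powerset,
      (v (insert j S) - v S) / ((m - 1).choose S.card : ℝ)
      = (∑ S ∈ (I.erase j).powerset, v (insert j S) / ((m - 1).choose S.card : ℝ))
        - ∑ S ∈ (I.erase j).powerset, v S / ((m - 1).choose S.card : ℝ) := by
    intro j _
    rw [← Finset.sum_sub_distrib]
    exact Finset.sum_congr rfl fun S _ => by rw [sub_div]
  rw [Finset.sum_congr rfl split, Finset.sum_sub_distrib]
  -- T1
  have hT1 : ∀ j ∈ I, ∑ S ∈ (I.erase j).powerset, v (insert j S) / ((m - 1).choose S.card : ℝ)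
      = ∑ T ∈ I.powerset, (if j ∈ T then v T / ((m - 1).choose (T.card - 1) : ℝ) else 0) := by
    intro j hj
    rw [← Finset.sum_filter]
    apply Finset.sum_nbij' (i := fun S => insert j S) (j := fun T => T.erase j)
    · intro S hS
      rw [mem_powerset, Finset.subset_erase] at hS
      simp only [mem_filter, mem_powerset]
      exact ⟨Finset.insert_subset hj hS.1, Finset.mem_insert_self j S⟩
    · intro T hT
      rw [mem_filter, mem_powerset] at hT
      rw [mem_powerset]
      exact Finset.erase_subset_erase j hT.1
    · intro S hS
      rw [mem_powerset, Finset.subset_erase] at hS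
      exact Finset.erase_insert hS.2
    · intro T hT
      rw [mem_filter] at hT
      exact Finset.insert_erase hT.2
    · intro S hS
      rw [mem_powerset, Finset.subset_erase] at hS
      rw [Finset.card_insert_of_notMem hS.2, Nat.add_sub_cancel]
  -- T2
  have hT2 : ∀ j ∈ I, ∑ S ∈ (I.erase j).powerset, v S / ((m - 1).choose S.card : ℝ)
      = ∑ T ∈ I.powerset, (if j ∉ T then v T / ((m - 1).choose T.card : ℝ) else 0) := by
    intro j _
    rw [powerset_erase, Finset.sum_filter]
  rw [Finset.sum_congr rfl hT1, Finset.sum_congr rfl hT2, Finset.sum_comm, Finset.sum_comm (s := I)]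
  have c1 : ∀ T ∈ I.powerset, ∑ j ∈ I, (if j ∈ T then v T / ((m - 1).choose (T.card - 1) : ℝ) else 0)
      = (T.card : ℝ) * (v T / ((m - 1).choose (T.card - 1) : ℝ)) := by
    intro T hT
    rw [mem_powerset] at hT
    rw [Finset.sum_ite_mem, Finset.inter_eq_right.2 hT, Finset.sum_const, nsmul_eq_mul]
  have c2 : ∀ T ∈ I.powerset, ∑ j ∈ I, (if j ∉ T then v T / ((m - 1).choose T.card : ℝ) else 0)
      = ((m : ℝ) - T.card) * (v T / ((m - 1).choose T.card : ℝ)) := by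
    intro T hT
    rw [mem_powerset] at hT
    rw [Finset.sum_ite, Finset.sum_const, Finset.sum_const_zero, add_zero, nsmul_eq_mul]
    congr 1
    rw [← Finset.sdiff_eq_filter, Finset.card_sdiff_of_subset hT]
    have := Finset.card_le_card hT
    push_cast [Nat.cast_sub this]
    ring
  rw [Finset.sum_congr rfl c1, Finset.sum_congr rfl c2, ← Finset.sum_sub_distrib]
  have main : ∑ T ∈ I.powerset,
      ((T.card : ℝ) * (v T / ((m - 1).choose (T.card - 1) : ℝ))
        - ((m : ℝ) - T.card) * (v T / ((m - 1).choose T.card : ℝ))) = (m : ℝ) * v I := by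
    rw [Finset.sum_eq_single_of_mem I (Finset.mem_powerset_self I)]
    · simp [← hm, Nat.choose_self, sub_self]
    · intro T hT hTne
      rw [mem_powerset] at hT
      by_cases hTe : T = ∅
      · subst hTe; simp [hv]
      · have ht1 : 1 ≤ T.card := Finset.card_pos.2 (Finset.nonempty_of_ne_empty hTe)
        have ht2 : T.card < m := by
          rcases lt_or_eq_of_le (Finset.card_le_card hT) with h | h
          · exact h
          · exact absurd (Finset.eq_of_subset_of_card_le hT h.ge) hTne
        have key : (T.card : ℝ) * ((m - 1).choose T.card : ℝ)
            = ((m : ℝ) - T.card) * ((m - 1).choose (T.card - 1) : ℝ) := by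
          have h0 := Nat.choose_succ_right_eq (m - 1) (T.card - 1)
          rw [Nat.sub_add_cancel ht1] at h0
          have hcast : ((m-1).choose T.card : ℝ) * (T.card : ℝ)
              = ((m-1).choose (T.card - 1) : ℝ) * (((m - 1) - (T.card - 1) : ℕ) : ℝ) := by
            exact_mod_cast congrArg (Nat.cast : ℕ → ℝ) h0
          rw [Nat.cast_sub (by omega), Nat.cast_sub (by omega : 1 ≤ m), Nat.cast_sub ht1]
            at hcast
          push_cast at hcast ⊢
          linarith [hcast]
        have hc1 : (((m - 1).choose (T.card - 1)) : ℝ) ≠ 0 := by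
          exact_mod_cast (Nat.choose_pos (by omega : T.card - 1 ≤ m - 1)).ne'
        have hc2 : (((m - 1).choose T.card) : ℝ) ≠ 0 := by
          exact_mod_cast (Nat.choose_pos (by omega : T.card ≤ m - 1)).ne'
        rw [sub_eq_zero]
        field_simp
        linear_combination v T * key
  rw [main, ← hm]
  field_simp

noncomputable def psiNeg (C a b : ℕ) : ℝ :=
  if a + b = 0 then -(1 / (C : ℝ))
  else (a : ℝ) / ((a : ℝ) + (b : ℝ) + 1) - (a : ℝ) / ((a : ℝ) + (b : ℝ))

section marginals
variable {α : Type*} [DecidableEq α] {C : ℕ} {P W : Finset α}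

lemma card_inter_split (S : Finset α) (hPW : Disjoint P W) :
    (S ∩ (P ∪ W)).card = (S ∩ P).card + (S ∩ W).card := by
  rw [Finset.inter_union_distrib_left,
    Finset.card_union_of_disjoint (hPW.mono inter_subset_right inter_subset_right)]

lemma marg_pos (hPW : Disjoint P W) {lam : α} (hlam : lam ∈ P) {S : Finset α} (hS : lam ∉ S) :
    mvGameExt C P W (insert lam S) - mvGameExt C P W S
      = psi C (S ∩ P).card (S ∩ W).card := by
  have hiP : insert lam S ∩ P = insert lam (S ∩ P) := Finset.insert_inter_of_mem hlam
  have hiPW : insert lam S ∩ (P ∪ W) = insert lam (S ∩ (P ∪ W)) :=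
    Finset.insert_inter_of_mem (Finset.mem_union_left _ hlam)
  have hne : insert lam S ∩ (P ∪ W) ≠ ∅ := by
    rw [hiPW]; exact Finset.insert_ne_empty _ _
  have hcP : (insert lam S ∩ P).card = (S ∩ P).card + 1 := by
    rw [hiP, Finset.card_insert_of_notMem (fun h => hS (Finset.mem_inter.1 h).1)]
  have hcPW : (insert lam S ∩ (P ∪ W)).card = (S ∩ P).card + (S ∩ W).card + 1 := by
    rw [hiPW, Finset.card_insert_of_notMem (fun h => hS (Finset.mem_inter.1 h).1),
      card_inter_split S hPW]
  set i := (S ∩ P).card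
  set j := (S ∩ W).card
  by_cases h0 : S ∩ (P ∪ W) = ∅
  · have hij : i + j = 0 := by rw [← card_inter_split S hPW, h0, Finset.card_empty]
    have hi0 : i = 0 := by omega
    have hj0 : j = 0 := by omega
    rw [mvGameExt, mvGameExt, if_pos h0, if_neg hne, psi, if_pos hij, hcP, hcPW, hi0, hj0]
    norm_num
  · have hij : i + j ≠ 0 := by
      rw [← card_inter_split S hPW]
      simpa [Finset.card_eq_zero] using h0
    rw [mvGameExt, mvGameExt, if_neg h0, if_neg hne, psi, if_neg hij, hcP, hcPW,
      card_inter_split S hPW]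
    push_cast
    ring

lemma marg_neg (hPW : Disjoint P W) {mu : α} (hmu : mu ∈ W) {S : Finset α} (hS : mu ∉ S) :
    mvGameExt C P W (insert mu S) - mvGameExt C P W S
      = psiNeg C (S ∩ P).card (S ∩ W).card := by
  have hmuP : mu ∉ P := fun h => (Finset.disjoint_left.1 hPW h) hmu
  have hiP : insert mu S ∩ P = S ∩ P := Finset.insert_inter_of_notMem hmuP
  have hiPW : insert mu S ∩ (P ∪ W) = insert mu (S ∩ (P ∪ W)) :=
    Finset.insert_inter_of_mem (Finset.mem_union_right _ hmu)
  have hne : insert mu S ∩ (P ∪ W) ≠ ∅ := by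
    rw [hiPW]; exact Finset.insert_ne_empty _ _
  have hcPW : (insert mu S ∩ (P ∪ W)).card = (S ∩ P).card + (S ∩ W).card + 1 := by
    rw [hiPW, Finset.card_insert_of_notMem (fun h => hS (Finset.mem_inter.1 h).1),
      card_inter_split S hPW]
  set i := (S ∩ P).card
  set j := (S ∩ W).card
  by_cases h0 : S ∩ (P ∪ W) = ∅
  · have hij : i + j = 0 := by rw [← card_inter_split S hPW, h0, Finset.card_empty]
    have hi0 : i = 0 := by omega
    have hj0 : j = 0 := by omega
    rw [mvGameExt, mvGameExt, if_pos h0, if_neg hne, psiNeg, if_pos hij, hiP, hcPW]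
    norm_num [hi0, hj0]
    exact Finset.card_eq_zero.1 hi0
  · have hij : i + j ≠ 0 := by
      rw [← card_inter_split S hPW]
      simpa [Finset.card_eq_zero] using h0
    rw [mvGameExt, mvGameExt, if_neg h0, if_neg hne, psiNeg, if_neg hij, hiP, hcPW,
      card_inter_split S hPW]
    push_cast
    ring

end marginals

noncomputable def SVnegSum (C p w : ℕ) : ℝ :=
  ∑ i ∈ range (p + 1), ∑ j ∈ range w,
    psiNeg C i j * (p.choose i : ℝ) * ((w - 1).choose j : ℝ) * Gf (p + w) (i + j)

section main
variable {α : Type*} [DecidableEq α]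

lemma shapley_mem_pos (C : ℕ) (P W A : Finset α) (hPW : Disjoint P W) (hPA : Disjoint P A)
    (hWA : Disjoint W A) {lam : α} (hlam : lam ∈ P) :
    shapley (P ∪ W ∪ A) (mvGameExt C P W) lam = SVpos C P.card W.card := by
  set p := P.card with hp'
  set w := W.card with hw'
  set a := A.card with ha'
  have hp : 1 ≤ p := Finset.card_pos.2 ⟨lam, hlam⟩
  have hcard : (P ∪ W ∪ A).card = p + w + a := by
    rw [Finset.card_union_of_disjoint (Finset.disjoint_union_left.2 ⟨hPA, hWA⟩),
      Finset.card_union_of_disjoint hPW]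
  have herase : (P ∪ W ∪ A).erase lam = (P.erase lam) ∪ W ∪ A := by
    rw [Finset.erase_union_distrib, Finset.erase_union_distrib,
      Finset.erase_eq_of_notMem (fun h => (Finset.disjoint_left.1 hPW hlam) h),
      Finset.erase_eq_of_notMem (fun h => (Finset.disjoint_left.1 hPA hlam) h)]
  have hd1 : Disjoint (P.erase lam) W := hPW.mono_left (Finset.erase_subset _ _)
  have hd2 : Disjoint (P.erase lam) A := hPA.mono_left (Finset.erase_subset _ _)
  rw [shapley, herase, hcard]
  set g : ℕ → ℕ → ℕ → ℝ :=
    fun i j k => psi C i j / ((p + w + a - 1).choose (i + j + k) : ℝ) with hg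
  have hsummand : ∀ S ∈ ((P.erase lam) ∪ W ∪ A).powerset,
      (mvGameExt C P W (insert lam S) - mvGameExt C P W S)
          / ((p + w + a - 1).choose S.card : ℝ)
        = g (S ∩ (P.erase lam)).card (S ∩ W).card (S ∩ A).card := by
    intro S hS
    rw [mem_powerset] at hS
    have hlamS : lam ∉ S := by
      intro h
      have hm := hS h
      simp only [Finset.mem_union, Finset.mem_erase] at hm
      rcases hm with (⟨h1, _⟩ | h) | h
      · exact h1 rfl
      · exact (Finset.disjoint_left.1 hPW hlam) h
      · exact (Finset.disjoint_left.1 hPA hlam) h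
    have hSP : S ∩ P = S ∩ (P.erase lam) := by
      ext x
      simp only [Finset.mem_inter, Finset.mem_erase]
      constructor
      · exact fun ⟨h1, h2⟩ => ⟨h1, fun he => hlamS (he ▸ h1), h2⟩
      · exact fun ⟨h1, _, h2⟩ => ⟨h1, h2⟩
    have hScard : S.card = (S ∩ (P.erase lam)).card + (S ∩ W).card + (S ∩ A).card := by
      have hS2 : S = (S ∩ (P.erase lam)) ∪ (S ∩ W) ∪ (S ∩ A) := by
        rw [← Finset.inter_union_distrib_left, ← Finset.inter_union_distrib_left,
          Finset.inter_eq_left.2 hS]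
      conv_lhs => rw [hS2]
      rw [Finset.card_union_of_disjoint, Finset.card_union_of_disjoint]
      · exact hd1.mono Finset.inter_subset_right Finset.inter_subset_right
      · exact Finset.disjoint_union_left.2
          ⟨hd2.mono Finset.inter_subset_right Finset.inter_subset_right,
           hWA.mono Finset.inter_subset_right Finset.inter_subset_right⟩
    rw [marg_pos hPW hlam hlamS, hSP, hScard]
  rw [Finset.sum_congr rfl hsummand, sum_powerset_three hd1 hd2 hWA g,
    Finset.card_erase_of_mem hlam, Nat.sub_add_cancel hp]
  have inner : ∀ i ∈ range p, ∀ j ∈ range (w + 1),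
      (1 / ((p + w + a : ℕ) : ℝ)) *
        ∑ k ∈ range (a + 1),
          ((p - 1).choose i : ℝ) * (w.choose j : ℝ) * (a.choose k : ℝ) * g i j k
      = psi C i j * ((p - 1).choose i : ℝ) * (w.choose j : ℝ) * Gf (p + w) (i + j) := by
    intro i hi j hj
    rw [mem_range] at hi hj
    rw [← Gf_sum a (p + w) (i + j) (by omega) (by omega), Finset.mul_sum, Finset.mul_sum]
    apply Finset.sum_congr rfl
    intro k hk
    rw [mem_range] at hk
    rw [← inv_mul_choose (n := p + w + a) (s := i + j + k) (by omega) (by omega)]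
    simp only [hg]
    ring
  calc (1 / ((p + w + a : ℕ) : ℝ)) * ∑ i ∈ range p, ∑ j ∈ range (w + 1),
        ∑ k ∈ range (a + 1),
          ((p - 1).choose i : ℝ) * (w.choose j : ℝ) * (a.choose k : ℝ) * g i j k
      = ∑ i ∈ range p, ∑ j ∈ range (w + 1), (1 / ((p + w + a : ℕ) : ℝ)) *
          ∑ k ∈ range (a + 1),
            ((p - 1).choose i : ℝ) * (w.choose j : ℝ) * (a.choose k : ℝ) * g i j k := by
        rw [Finset.mul_sum]
        exact Finset.sum_congr rfl fun i _ => Finset.mul_sum _ _ _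
    _ = ∑ i ∈ range p, ∑ j ∈ range (w + 1),
          psi C i j * ((p - 1).choose i : ℝ) * (w.choose j : ℝ) * Gf (p + w) (i + j) := by
        exact Finset.sum_congr rfl fun i hi => Finset.sum_congr rfl fun j hj => inner i hi j hj
    _ = SVpos C p w := by
        rw [SVpos, Finset.mul_sum]
        apply Finset.sum_congr rfl; intro i hi
        rw [Finset.mul_sum]
        apply Finset.sum_congr rfl; intro j hj
        rw [mem_range] at hi hj
        rw [← inv_mul_choose (n := p + w) (s := i + j) (by omega) (by omega),
          Nat.cast_add, one_div, mul_inv]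
        ring

lemma shapley_mem_neg (C : ℕ) (P W A : Finset α) (hPW : Disjoint P W) (hPA : Disjoint P A)
    (hWA : Disjoint W A) {mu : α} (hmu : mu ∈ W) :
    shapley (P ∪ W ∪ A) (mvGameExt C P W) mu = SVnegSum C P.card W.card := by
  set p := P.card with hp'
  set w := W.card with hw'
  set a := A.card with ha'
  have hw : 1 ≤ w := Finset.card_pos.2 ⟨mu, hmu⟩
  have hcard : (P ∪ W ∪ A).card = p + w + a := by
    rw [Finset.card_union_of_disjoint (Finset.disjoint_union_left.2 ⟨hPA, hWA⟩),
      Finset.card_union_of_disjoint hPW]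
  have herase : (P ∪ W ∪ A).erase mu = P ∪ (W.erase mu) ∪ A := by
    rw [Finset.erase_union_distrib, Finset.erase_union_distrib,
      Finset.erase_eq_of_notMem (fun h => (Finset.disjoint_left.1 hPW h) hmu),
      Finset.erase_eq_of_notMem (fun h => (Finset.disjoint_left.1 hWA hmu) h)]
  have hd1 : Disjoint P (W.erase mu) := hPW.mono_right (Finset.erase_subset _ _)
  have hd3 : Disjoint (W.erase mu) A := hWA.mono_left (Finset.erase_subset _ _)
  rw [shapley, herase, hcard]
  set g : ℕ → ℕ → ℕ → ℝ :=
    fun i j k => psiNeg C i j / ((p + w + a - 1).choose (i + j + k) : ℝ) with hg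
  have hsummand : ∀ S ∈ (P ∪ (W.erase mu) ∪ A).powerset,
      (mvGameExt C P W (insert mu S) - mvGameExt C P W S)
          / ((p + w + a - 1).choose S.card : ℝ)
        = g (S ∩ P).card (S ∩ (W.erase mu)).card (S ∩ A).card := by
    intro S hS
    rw [mem_powerset] at hS
    have hmuS : mu ∉ S := by
      intro h
      have hm := hS h
      simp only [Finset.mem_union, Finset.mem_erase] at hm
      rcases hm with (h | ⟨h1, _⟩) | h
      · exact (Finset.disjoint_left.1 hPW h) hmu
      · exact h1 rfl
      · exact (Finset.disjoint_left.1 hWA hmu) h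
    have hSW : S ∩ W = S ∩ (W.erase mu) := by
      ext x
      simp only [Finset.mem_inter, Finset.mem_erase]
      constructor
      · exact fun ⟨h1, h2⟩ => ⟨h1, fun he => hmuS (he ▸ h1), h2⟩
      · exact fun ⟨h1, _, h2⟩ => ⟨h1, h2⟩
    have hScard : S.card = (S ∩ P).card + (S ∩ (W.erase mu)).card + (S ∩ A).card := by
      have hS2 : S = (S ∩ P) ∪ (S ∩ (W.erase mu)) ∪ (S ∩ A) := by
        rw [← Finset.inter_union_distrib_left, ← Finset.inter_union_distrib_left,
          Finset.inter_eq_left.2 hS]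
      conv_lhs => rw [hS2]
      rw [Finset.card_union_of_disjoint, Finset.card_union_of_disjoint]
      · exact hd1.mono Finset.inter_subset_right Finset.inter_subset_right
      · exact Finset.disjoint_union_left.2
          ⟨hPA.mono Finset.inter_subset_right Finset.inter_subset_right,
           hd3.mono Finset.inter_subset_right Finset.inter_subset_right⟩
    rw [marg_neg hPW hmu hmuS, hSW, hScard]
  rw [Finset.sum_congr rfl hsummand, sum_powerset_three hd1 hPA hd3 g,
    Finset.card_erase_of_mem hmu, Nat.sub_add_cancel hw]
  have inner : ∀ i ∈ range (p + 1), ∀ j ∈ range w,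
      (1 / ((p + w + a : ℕ) : ℝ)) *
        ∑ k ∈ range (a + 1),
          (p.choose i : ℝ) * ((w - 1).choose j : ℝ) * (a.choose k : ℝ) * g i j k
      = psiNeg C i j * (p.choose i : ℝ) * ((w - 1).choose j : ℝ) * Gf (p + w) (i + j) := by
    intro i hi j hj
    rw [mem_range] at hi hj
    rw [← Gf_sum a (p + w) (i + j) (by omega) (by omega), Finset.mul_sum, Finset.mul_sum]
    apply Finset.sum_congr rfl
    intro k hk
    rw [mem_range] at hk
    rw [← inv_mul_choose (n := p + w + a) (s := i + j + k) (by omega) (by omega)]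
    simp only [hg]
    ring
  calc (1 / ((p + w + a : ℕ) : ℝ)) * ∑ i ∈ range (p + 1), ∑ j ∈ range w,
        ∑ k ∈ range (a + 1),
          (p.choose i : ℝ) * ((w - 1).choose j : ℝ) * (a.choose k : ℝ) * g i j k
      = ∑ i ∈ range (p + 1), ∑ j ∈ range w, (1 / ((p + w + a : ℕ) : ℝ)) *
          ∑ k ∈ range (a + 1),
            (p.choose i : ℝ) * ((w - 1).choose j : ℝ) * (a.choose k : ℝ) * g i j k := by
        rw [Finset.mul_sum]
        exact Finset.sum_congr rfl fun i _ => Finset.mul_sum _ _ _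
    _ = ∑ i ∈ range (p + 1), ∑ j ∈ range w,
          psiNeg C i j * (p.choose i : ℝ) * ((w - 1).choose j : ℝ) * Gf (p + w) (i + j) := by
        exact Finset.sum_congr rfl fun i hi => Finset.sum_congr rfl fun j hj => inner i hi j hj
    _ = SVnegSum C p w := rfl

lemma shapley_mem_abs (C : ℕ) (P W A : Finset α) (hPA : Disjoint P A) (hWA : Disjoint W A)
    {x : α} (hx : x ∈ A) :
    shapley (P ∪ W ∪ A) (mvGameExt C P W) x = 0 := by
  have hxPW : x ∉ P ∪ W := by
    intro h
    rcases Finset.mem_union.1 h with h | h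
    · exact (Finset.disjoint_left.1 hPA h) hx
    · exact (Finset.disjoint_left.1 hWA h) hx
  have hnull : ∀ S : Finset α, mvGameExt C P W (insert x S) = mvGameExt C P W S := by
    intro S
    have h1 : insert x S ∩ (P ∪ W) = S ∩ (P ∪ W) := Finset.insert_inter_of_notMem hxPW
    have h2 : insert x S ∩ P = S ∩ P :=
      Finset.insert_inter_of_notMem (fun h => hxPW (Finset.mem_union_left _ h))
    rw [mvGameExt, mvGameExt, h1, h2]
  rw [shapley]
  have : ∀ S ∈ ((P ∪ W ∪ A).erase x).powerset,
      (mvGameExt C P W (insert x S) - mvGameExt C P W S)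
        / (((P ∪ W ∪ A).card - 1).choose S.card : ℝ) = 0 := by
    intro S _
    rw [hnull S, sub_self, zero_div]
  rw [Finset.sum_congr rfl this, Finset.sum_const_zero, mul_zero]

end main


/-- In the extended MV single-point game with abstaining players, abstaining players get
Shapley value `0`, correct players get `SV⁺_{p,w}`, and (if `w ≥ 1`) incorrect players get
`SV⁻_{p,w}`. -/
theorem stmt_10 {α : Type*} [DecidableEq α] (C : ℕ) (hC : 2 ≤ C)
    (P W A : Finset α) (hPW : Disjoint P W) (hPA : Disjoint P A) (hWA : Disjoint W A)
    (hpw : 1 ≤ P.card + W.card) :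
    (∀ a ∈ A, shapley (P ∪ W ∪ A) (mvGameExt C P W) a = 0) ∧
      (∀ lam ∈ P, shapley (P ∪ W ∪ A) (mvGameExt C P W) lam = SVpos C P.card W.card) ∧
      (1 ≤ W.card → ∀ mu ∈ W,
        shapley (P ∪ W ∪ A) (mvGameExt C P W) mu = SVneg C P.card W.card) := by
  have hPWA : Disjoint (P ∪ W) A := Finset.disjoint_union_left.2 ⟨hPA, hWA⟩
  refine ⟨fun x hx => shapley_mem_abs C P W A hPA hWA hx,
    fun lam hlam => shapley_mem_pos C P W A hPW hPA hWA hlam, ?_⟩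
  intro hw mu hmu
  rw [shapley_mem_neg C P W A hPW hPA hWA hmu]
  set p := P.card with hp'
  set w := W.card with hw'
  have hPWcard : (P ∪ W).card = p + w := Finset.card_union_of_disjoint hPW
  have hPWne : (P ∪ W).Nonempty := Finset.card_pos.1 (by rw [hPWcard]; omega)
  obtain ⟨y, hy⟩ := hPWne
  have hne : (P ∪ W ∪ A).Nonempty := ⟨y, Finset.mem_union_left _ hy⟩
  have hv0 : mvGameExt C P W (∅ : Finset α) = 0 := by simp [mvGameExt]
  have heff := shapley_efficiency (P ∪ W ∪ A) (mvGameExt C P W) hne hv0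
  have hvI : mvGameExt C P W (P ∪ W ∪ A) = (p : ℝ) / ((p : ℝ) + (w : ℝ)) - 1 / C := by
    have h1 : (P ∪ W ∪ A) ∩ (P ∪ W) = P ∪ W :=
      Finset.inter_eq_right.2 Finset.subset_union_left
    have h2 : (P ∪ W ∪ A) ∩ P = P :=
      Finset.inter_eq_right.2
        (subset_trans Finset.subset_union_left Finset.subset_union_left)
    rw [mvGameExt, h1, h2, if_neg (Finset.nonempty_iff_ne_empty.1 ⟨y, hy⟩), hPWcard,
      Nat.cast_add]
  have e1 : ∑ x ∈ P, shapley (P ∪ W ∪ A) (mvGameExt C P W) x = (p : ℝ) * SVpos C p w := by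
    rw [Finset.sum_congr rfl (fun x hx => shapley_mem_pos C P W A hPW hPA hWA hx),
      Finset.sum_const, nsmul_eq_mul]
  have e2 : ∑ x ∈ W, shapley (P ∪ W ∪ A) (mvGameExt C P W) x = (w : ℝ) * SVnegSum C p w := by
    rw [Finset.sum_congr rfl (fun x hx => shapley_mem_neg C P W A hPW hPA hWA hx),
      Finset.sum_const, nsmul_eq_mul]
  have e3 : ∑ x ∈ A, shapley (P ∪ W ∪ A) (mvGameExt C P W) x = 0 := by
    rw [Finset.sum_congr rfl (fun x hx => shapley_mem_abs C P W A hPA hWA hx),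
      Finset.sum_const_zero]
  rw [Finset.sum_union hPWA, Finset.sum_union hPW, e1, e2, e3, add_zero, hvI] at heff
  have hwne : ((w : ℕ) : ℝ) ≠ 0 := by
    have : 0 < w := hw
    positivity
  rw [SVneg, eq_div_iff hwne]
  linear_combination heff
end
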